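/- Let (c₀⁽¹⁾, c⁽¹⁾) and (c₀⁽²⁾, c⁽²⁾) in ℝ × ℝ³ both satisfy ‖c⁽ʲ⁾‖² - (c₀⁽ʲ⁾)² = 1, and suppose (c₀⁽¹⁾, c⁽¹⁾) ≠ ±(c₀⁽²⁾, c⁽²⁾). If (f, b) and (f', b') in ℝ³ × ℝ³ each satisfy, for both j = 1, 2: c₀⁽ʲ⁾ f + b × c⁽ʲ⁾ = 0, f · c⁽ʲ⁾ = 0, together with f · b = 0 and ‖f‖² - ‖b‖² = 1 (and the same for (f', b')), then (f', b') = (f, b) or (f', b') = (-f, -b). -/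
import Mathlib

open Matrix

private lemma dot_nn (v : Fin 3 → ℝ) : 0 ≤ v ⬝ᵥ v := by
  simp only [dotProduct, Fin.sum_univ_three]
  nlinarith [sq_nonneg (v 0), sq_nonneg (v 1), sq_nonneg (v 2)]

private lemma bac_cab (a b c : Fin 3 → ℝ) :
    crossProduct a (crossProduct b c) = (a ⬝ᵥ c) • b - (a ⬝ᵥ b) • c := by
  funext i
  fin_cases i <;>
    simp [cross_apply, dotProduct, Fin.sum_univ_three] <;> ring

private lemma cross_zero_imp {u v : Fin 3 → ℝ} (hu : u ≠ 0)
    (h : crossProduct u v = 0) : ∃ t : ℝ, v = t • u := by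
  have h0 := congrFun h 0
  have h1 := congrFun h 1
  have h2 := congrFun h 2
  simp only [cross_apply, Matrix.cons_val_zero, Matrix.cons_val_one, Matrix.head_cons,
    Matrix.cons_val_two, Matrix.tail_cons, Pi.zero_apply] at h0 h1 h2
  rw [sub_eq_zero] at h0 h1 h2
  have hune : u 0 ≠ 0 ∨ u 1 ≠ 0 ∨ u 2 ≠ 0 := by
    by_contra hc
    push_neg at hc
    exact hu (funext fun i => by fin_cases i <;> simp [hc.1, hc.2.1, hc.2.2])
  rcases hune with h | h | h
  · refine ⟨v 0 / u 0, funext fun i => ?_⟩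
    have key : ∀ k : Fin 3, v k * u 0 = v 0 * u k := by
      intro k
      fin_cases k
      · show v 0 * u 0 = v 0 * u 0; ring
      · show v 1 * u 0 = v 0 * u 1; nlinarith
      · show v 2 * u 0 = v 0 * u 2; nlinarith
    rw [Pi.smul_apply, smul_eq_mul]
    field_simp
    exact key i
  · refine ⟨v 1 / u 1, funext fun i => ?_⟩
    have key : ∀ k : Fin 3, v k * u 1 = v 1 * u k := by
      intro k
      fin_cases k
      · show v 0 * u 1 = v 1 * u 0; nlinarith
      · show v 1 * u 1 = v 1 * u 1; ring
      · show v 2 * u 1 = v 1 * u 2; nlinarith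
    rw [Pi.smul_apply, smul_eq_mul]
    field_simp
    exact key i
  · refine ⟨v 2 / u 2, funext fun i => ?_⟩
    have key : ∀ k : Fin 3, v k * u 2 = v 2 * u k := by
      intro k
      fin_cases k
      · show v 0 * u 2 = v 2 * u 0; nlinarith
      · show v 1 * u 2 = v 2 * u 1; nlinarith
      · show v 2 * u 2 = v 2 * u 2; ring
    rw [Pi.smul_apply, smul_eq_mul]
    field_simp
    exact key i

theorem stmt16 (c₀ : Fin 2 → ℝ) (c : Fin 2 → Fin 3 → ℝ)
    (hcn : ∀ j, c j ⬝ᵥ c j - (c₀ j) ^ 2 = 1)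
    (hne : ¬ ((c₀ 0, c 0) = (c₀ 1, c 1) ∨ (c₀ 0, c 0) = (-c₀ 1, -c 1)))
    (f b f' b' : Fin 3 → ℝ)
    (h1 : ∀ j, c₀ j • f + crossProduct b (c j) = 0)
    (h2 : ∀ j, f ⬝ᵥ c j = 0)
    (h3 : f ⬝ᵥ b = 0) (h4 : f ⬝ᵥ f - b ⬝ᵥ b = 1)
    (h1' : ∀ j, c₀ j • f' + crossProduct b' (c j) = 0)
    (h2' : ∀ j, f' ⬝ᵥ c j = 0)
    (h3' : f' ⬝ᵥ b' = 0) (h4' : f' ⬝ᵥ f' - b' ⬝ᵥ b' = 1) :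
    (f' = f ∧ b' = b) ∨ (f' = -f ∧ b' = -b) := by
  have hfne : f ≠ 0 := by
    intro hf; rw [hf] at h4; simp at h4; nlinarith [dot_nn b]
  have hfne' : f' ≠ 0 := by
    intro hf; rw [hf] at h4'; simp at h4'; nlinarith [dot_nn b']
  have hc0ne : c 0 ≠ 0 := by
    intro hc
    have := hcn 0
    rw [hc] at this; simp at this
    nlinarith [sq_nonneg (c₀ 0)]
  by_cases hn : crossProduct (c 0) (c 1) = 0
  · -- c 0 and c 1 parallel: contradicts hne
    exfalso
    obtain ⟨t, ht⟩ := cross_zero_imp hc0ne hn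
    have e1 := h1 1
    rw [ht, LinearMap.map_smul] at e1
    have hb0 : crossProduct b (c 0) = -(c₀ 0 • f) := by
      linear_combination (norm := module) h1 0
    rw [hb0] at e1
    have hsm : (c₀ 1 - t * c₀ 0) • f = 0 := by
      rw [sub_smul, mul_smul]
      linear_combination (norm := module) e1
    have hc01 : c₀ 1 = t * c₀ 0 := by
      rcases smul_eq_zero.mp hsm with h | h
      · linarith
      · exact absurd h hfne
    have ht2 : t ^ 2 = 1 := by
      have e := hcn 1
      rw [ht, smul_dotProduct, dotProduct_smul, hc01] at e
      have e0 := hcn 0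
      simp only [smul_eq_mul] at e
      nlinarith
    have h10 : t = 1 ∨ t = -1 := by
      rcases mul_eq_zero.mp (show (t - 1) * (t + 1) = 0 by nlinarith) with h | h
      · left; linarith
      · right; linarith
    apply hne
    rcases h10 with h | h
    · left
      rw [h] at ht hc01
      simp only [one_smul, one_mul] at ht hc01
      rw [ht, hc01]
    · right
      rw [h] at ht hc01
      rw [Prod.ext_iff]
      refine ⟨by show c₀ 0 = -c₀ 1; linarith, ?_⟩
      show c 0 = -c 1
      rw [ht]
      funext i
      simp
  · -- main case
    have hnf : crossProduct (crossProduct (c 0) (c 1)) f = 0 := by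
      rw [← cross_anticomm, bac_cab, h2 0, h2 1]
      simp
    have hnf' : crossProduct (crossProduct (c 0) (c 1)) f' = 0 := by
      rw [← cross_anticomm, bac_cab, h2' 0, h2' 1]
      simp
    obtain ⟨α, hα⟩ := cross_zero_imp hn hnf
    obtain ⟨α', hα'⟩ := cross_zero_imp hn hnf'
    have hαne : α ≠ 0 := by
      intro h; rw [h, zero_smul] at hα; exact hfne hα
    -- w := α • b' - α' • b satisfies (c j) × w = 0
    have key : ∀ j, crossProduct (c j) (α • b' - α' • b) = 0 := by
      intro j
      have eb : crossProduct (c j) b = c₀ j • f := by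
        rw [← cross_anticomm]
        linear_combination (norm := module) (-1 : ℝ) • h1 j
      have eb' : crossProduct (c j) b' = c₀ j • f' := by
        rw [← cross_anticomm]
        linear_combination (norm := module) (-1 : ℝ) • h1' j
      rw [map_sub, LinearMap.map_smul, LinearMap.map_smul, eb, eb', hα, hα']
      rw [smul_smul, smul_smul, smul_smul, smul_smul]
      rw [sub_eq_zero]
      ring_nf
    obtain ⟨s, hs⟩ := cross_zero_imp hc0ne (key 0)
    have hs0 : s = 0 := by
      have e := key 1
      rw [hs, LinearMap.map_smul] at e
      have : crossProduct (c 1) (c 0) = -(crossProduct (c 0) (c 1)) := by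
        rw [← cross_anticomm]
      rw [this, smul_neg, neg_eq_zero] at e
      rcases smul_eq_zero.mp e with h | h
      · exact h
      · exact absurd h hn
    have hw : α • b' = α' • b := by
      rw [hs0, zero_smul] at hs
      linear_combination (norm := module) hs
    set lam := α' / α with hlam
    have hf'l : f' = lam • f := by
      rw [hα', hα, smul_smul, hlam, div_mul_cancel₀ _ hαne]
    have hb'l : b' = lam • b := by
      have : b' = α⁻¹ • (α • b') := by
        rw [smul_smul, inv_mul_cancel₀ hαne, one_smul]
      rw [this, hw, smul_smul, hlam, div_eq_inv_mul]
    have hl2 : lam ^ 2 = 1 := by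
      rw [hf'l, hb'l] at h4'
      rw [smul_dotProduct, dotProduct_smul, smul_dotProduct, dotProduct_smul] at h4'
      simp only [smul_eq_mul] at h4'
      nlinarith
    rcases mul_eq_zero.mp (show (lam - 1) * (lam + 1) = 0 by nlinarith) with h | h
    · left
      have hl : lam = 1 := by linarith
      rw [hl, one_smul] at hf'l hb'l
      exact ⟨hf'l, hb'l⟩
    · right
      have hl : lam = -1 := by linarith
      rw [hl, neg_smul, one_smul] at hf'l hb'l
      exact ⟨hf'l, hb'l⟩
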